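/- arXiv:1007.4725 — 6 statements merged into one kernel-verified Lean document; each statement's English description precedes it below -/
import Mathlib

section
/- Let p be an odd prime number and let G be a subgroup of GL₂(𝔽_p) such that every element of G is either a diagonal matrix or an antidiagonal matrix, and such that G contains at least one antidiagonal element. Then for every g ∈ G, the scalar matrix (det g)²·I belongs to G. -/
open Matrix
open scoped MatrixGroups

theorem stmt_4 (p : ℕ) (hp : p.Prime) (hodd : Odd p)
    (G : Subgroup (GL (Fin 2) (ZMod p)))
    (hG : ∀ g ∈ G, ((g : Matrix (Fin 2) (Fin 2) (ZMod p)) 0 1 = 0 ∧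
                    (g : Matrix (Fin 2) (Fin 2) (ZMod p)) 1 0 = 0) ∨
                   ((g : Matrix (Fin 2) (Fin 2) (ZMod p)) 0 0 = 0 ∧
                    (g : Matrix (Fin 2) (Fin 2) (ZMod p)) 1 1 = 0))
    (hanti : ∃ g ∈ G, (g : Matrix (Fin 2) (Fin 2) (ZMod p)) 0 0 = 0 ∧
                      (g : Matrix (Fin 2) (Fin 2) (ZMod p)) 1 1 = 0) :
    ∀ g ∈ G, ∃ h ∈ G, (h : Matrix (Fin 2) (Fin 2) (ZMod p)) =
      ((g : Matrix (Fin 2) (Fin 2) (ZMod p)).det) ^ 2 •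
        (1 : Matrix (Fin 2) (Fin 2) (ZMod p)) := by
  obtain ⟨w, hwG, hw00, hw11⟩ := hanti
  intro g hg
  have hdet : ((g : Matrix (Fin 2) (Fin 2) (ZMod p)).det) =
      (g : Matrix (Fin 2) (Fin 2) (ZMod p)) 0 0 * (g : Matrix (Fin 2) (Fin 2) (ZMod p)) 1 1 -
      (g : Matrix (Fin 2) (Fin 2) (ZMod p)) 0 1 * (g : Matrix (Fin 2) (Fin 2) (ZMod p)) 1 0 :=
    Matrix.det_fin_two _
  rcases hG g hg with ⟨h01, h10⟩ | ⟨h00, h11⟩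
  · refine ⟨(g * w * g * w⁻¹) ^ 2,
      G.pow_mem (G.mul_mem (G.mul_mem (G.mul_mem hg hwG) hg) (G.inv_mem hwG)) 2, ?_⟩
    set a := (g : Matrix (Fin 2) (Fin 2) (ZMod p)) 0 0 with ha
    set d := (g : Matrix (Fin 2) (Fin 2) (ZMod p)) 1 1 with hd
    have key : ((g : Matrix (Fin 2) (Fin 2) (ZMod p)) * w * g : Matrix (Fin 2) (Fin 2) (ZMod p))
        = (a * d) • (w : Matrix (Fin 2) (Fin 2) (ZMod p)) := by
      ext i j
      fin_cases i <;> fin_cases j <;>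
        simp [Matrix.mul_apply, Fin.sum_univ_two, h01, h10, hw00, hw11, ha, hd] <;> ring
    have hgw : ((g * w * g * w⁻¹ : GL (Fin 2) (ZMod p)) : Matrix (Fin 2) (Fin 2) (ZMod p))
        = (a * d) • (1 : Matrix (Fin 2) (Fin 2) (ZMod p)) := by
      have h1 : ((g * w * g * w⁻¹ : GL (Fin 2) (ZMod p)) : Matrix (Fin 2) (Fin 2) (ZMod p))
          = ((g : Matrix (Fin 2) (Fin 2) (ZMod p)) * w * g) *
            ((w⁻¹ : GL (Fin 2) (ZMod p)) : Matrix (Fin 2) (Fin 2) (ZMod p)) := by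
        simp only [Units.val_mul]
      rw [h1, key, smul_mul_assoc, Units.mul_inv]
    calc ((((g * w * g * w⁻¹) ^ 2 : GL (Fin 2) (ZMod p))) : Matrix (Fin 2) (Fin 2) (ZMod p))
        = (((g * w * g * w⁻¹ : GL (Fin 2) (ZMod p)) : Matrix (Fin 2) (Fin 2) (ZMod p))) ^ 2 := by
          simp [Units.val_pow_eq_pow_val]
      _ = ((a * d) • (1 : Matrix (Fin 2) (Fin 2) (ZMod p))) ^ 2 := by rw [hgw]
      _ = _ := by
          rw [smul_pow, one_pow, hdet, h01]
          ring_nf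
  · refine ⟨g ^ 4, G.pow_mem hg 4, ?_⟩
    set b := (g : Matrix (Fin 2) (Fin 2) (ZMod p)) 0 1 with hb
    set c := (g : Matrix (Fin 2) (Fin 2) (ZMod p)) 1 0 with hc
    have key : ((g : Matrix (Fin 2) (Fin 2) (ZMod p)) * g)
        = (b * c) • (1 : Matrix (Fin 2) (Fin 2) (ZMod p)) := by
      ext i j
      fin_cases i <;> fin_cases j <;>
        simp [Matrix.mul_apply, Fin.sum_univ_two, h00, h11, hb, hc] <;> ring
    calc ((g ^ 4 : GL (Fin 2) (ZMod p)) : Matrix (Fin 2) (Fin 2) (ZMod p))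
        = ((g : Matrix (Fin 2) (Fin 2) (ZMod p)) * g) * ((g : Matrix (Fin 2) (Fin 2) (ZMod p)) * g) := by
          rw [Units.val_pow_eq_pow_val, show (4:ℕ) = 2 + 2 from rfl, pow_add, pow_two]
      _ = ((b * c) • (1 : Matrix (Fin 2) (Fin 2) (ZMod p))) * ((b * c) • (1 : Matrix (Fin 2) (Fin 2) (ZMod p))) := by rw [key]
      _ = _ := by
          rw [hdet, h00]
          simp [smul_mul_assoc, mul_smul_comm, smul_smul]
          ring_nf
end

section
/- Let p be an odd prime number, let α ∈ 𝔽_p^× be a non-square, and let G be a subgroup of GL₂(𝔽_p) every element of which is either of the form [[a, bα],[b, a]] or of the form [[a, −bα],[b, −a]] for some (a, b) ∈ 𝔽_p² with (a,b) ≠ (0,0). Then for every g ∈ G, the scalar matrix (det g)²·I belongs to G. -/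
open Matrix
open scoped MatrixGroups

lemma euler_neg (p : ℕ) [Fact p.Prime] (α : ZMod p) (hα0 : α ≠ 0) (hα : ¬ IsSquare α) :
    α ^ (p / 2) = -1 := by
  rcases ZMod.pow_div_two_eq_neg_one_or_one p hα0 with h | h
  · exact absurd ((ZMod.euler_criterion p hα0).mpr h) hα
  · exact h

lemma key (p : ℕ) [Fact p.Prime] (hodd : Odd p) (α : ZMod p) (hα0 : α ≠ 0)
    (hα : ¬ IsSquare α) (a b : ZMod p) :
    (!![a, b * α; b, a] : Matrix (Fin 2) (Fin 2) (ZMod p)) ^ (2 * (p + 1)) =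
      ((a ^ 2 - b ^ 2 * α) ^ 2) • (1 : Matrix (Fin 2) (Fin 2) (ZMod p)) := by
  set S : Matrix (Fin 2) (Fin 2) (ZMod p) := !![0, α; 1, 0] with hS
  have hS2 : S * S = α • (1 : Matrix (Fin 2) (Fin 2) (ZMod p)) := by
    ext i j; fin_cases i <;> fin_cases j <;>
      simp [hS, Matrix.mul_apply, Fin.sum_univ_two, Matrix.one_apply]
  have hM : !![a, b * α; b, a] = a • (1 : Matrix (Fin 2) (Fin 2) (ZMod p)) + b • S := by
    ext i j; fin_cases i <;> fin_cases j <;> simp [hS, Matrix.one_apply]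
  have hpodd : p = 2 * (p / 2) + 1 := by have := Nat.odd_iff.mp hodd; omega
  have hSp : S ^ p = -S := by
    have h1 : S ^ p = (S * S) ^ (p / 2) * S := by
      conv_rhs => rw [← pow_two, ← pow_mul, ← pow_succ, ← hpodd]
    rw [h1, hS2, smul_pow, one_pow, euler_neg p α hα0 hα, smul_mul_assoc, one_mul,
      neg_smul, one_smul]
  have hcomm : Commute (a • (1 : Matrix (Fin 2) (Fin 2) (ZMod p))) (b • S) :=
    ((Commute.one_left S).smul_left a).smul_right b
  have hMp : (a • (1 : Matrix (Fin 2) (Fin 2) (ZMod p)) + b • S) ^ p = a • 1 - b • S := by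
    rw [add_pow_char_of_commute _ hcomm, smul_pow, smul_pow, one_pow, ZMod.pow_card,
      ZMod.pow_card, hSp, smul_neg, ← sub_eq_add_neg]
  have hMp1 : (a • (1 : Matrix (Fin 2) (Fin 2) (ZMod p)) + b • S) ^ (p + 1)
      = (a ^ 2 - b ^ 2 * α) • 1 := by
    rw [pow_succ, hMp]
    have expand : (a • (1 : Matrix (Fin 2) (Fin 2) (ZMod p)) - b • S) * (a • 1 + b • S)
        = (a * a) • 1 - (b * b) • (S * S) := by
      simp only [sub_mul, mul_add, smul_mul_smul_comm, mul_one, one_mul]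
      rw [mul_comm b a]
      abel
    rw [expand, hS2, smul_smul]
    rw [← sub_smul]
    congr 1
    ring
  calc (!![a, b * α; b, a] : Matrix (Fin 2) (Fin 2) (ZMod p)) ^ (2 * (p + 1))
      = ((a • (1 : Matrix (Fin 2) (Fin 2) (ZMod p)) + b • S) ^ (p + 1)) ^ 2 := by
        rw [hM, mul_comm 2, pow_mul]
    _ = ((a ^ 2 - b ^ 2 * α) ^ 2) • 1 := by
        rw [hMp1, smul_pow, one_pow]

theorem stmt_8 (p : ℕ) (hp : p.Prime) (hodd : Odd p)
    (α : ZMod p) (hα0 : α ≠ 0) (hα : ¬ IsSquare α)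
    (G : Subgroup (GL (Fin 2) (ZMod p)))
    (hG : ∀ g ∈ G, ∃ a b : ZMod p, (a, b) ≠ (0, 0) ∧
      ((g : Matrix (Fin 2) (Fin 2) (ZMod p)) = !![a, b * α; b, a] ∨
       (g : Matrix (Fin 2) (Fin 2) (ZMod p)) = !![a, -(b * α); b, -a])) :
    ∀ g ∈ G, ∃ h ∈ G, (h : Matrix (Fin 2) (Fin 2) (ZMod p)) =
      ((g : Matrix (Fin 2) (Fin 2) (ZMod p)).det) ^ 2 •
        (1 : Matrix (Fin 2) (Fin 2) (ZMod p)) := by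
  haveI := Fact.mk hp
  intro g hg
  obtain ⟨a, b, hab, hcase | hcase⟩ := hG g hg
  · refine ⟨g ^ (2 * (p + 1)), pow_mem hg _, ?_⟩
    have hval : ((g ^ (2 * (p + 1)) : GL (Fin 2) (ZMod p)) : Matrix (Fin 2) (Fin 2) (ZMod p))
        = ((g : Matrix (Fin 2) (Fin 2) (ZMod p))) ^ (2 * (p + 1)) :=
      Units.val_pow_eq_pow_val _ _
    have hdet : ((g : Matrix (Fin 2) (Fin 2) (ZMod p)).det) ^ 2 = (a ^ 2 - b ^ 2 * α) ^ 2 := by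
      rw [hcase, Matrix.det_fin_two_of]; ring
    rw [hval, hcase, key p hodd α hα0 hα a b, Matrix.det_fin_two_of]
    congr 1; ring
  · refine ⟨g ^ 4, pow_mem hg 4, ?_⟩
    have hval : ((g ^ 4 : GL (Fin 2) (ZMod p)) : Matrix (Fin 2) (Fin 2) (ZMod p))
        = ((g : Matrix (Fin 2) (Fin 2) (ZMod p))) ^ 4 :=
      Units.val_pow_eq_pow_val _ _
    have hdet : ((g : Matrix (Fin 2) (Fin 2) (ZMod p)).det) ^ 2 = (a ^ 2 - b ^ 2 * α) ^ 2 := by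
      rw [hcase, Matrix.det_fin_two_of]; ring
    have hsq : (!![a, -(b * α); b, -a] : Matrix (Fin 2) (Fin 2) (ZMod p))
        * !![a, -(b * α); b, -a] = (a ^ 2 - b ^ 2 * α) • 1 := by
      ext i j; fin_cases i <;> fin_cases j <;>
        (simp [Matrix.mul_apply, Fin.sum_univ_two, Matrix.one_apply]; try ring)
    have h2 : (!![a, -(b * α); b, -a] : Matrix (Fin 2) (Fin 2) (ZMod p)) ^ 2
        = (a ^ 2 - b ^ 2 * α) • 1 := by rw [pow_two, hsq]
    have hpow : (!![a, -(b * α); b, -a] : Matrix (Fin 2) (Fin 2) (ZMod p)) ^ 4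
        = ((a ^ 2 - b ^ 2 * α) ^ 2) • 1 := by
      rw [show (4 : ℕ) = 2 * 2 from rfl, pow_mul, h2, smul_pow, one_pow]
    rw [hval, hcase, hpow, Matrix.det_fin_two_of]
    congr 1; ring
end

section
/- Let p be an odd prime number and let G be a subgroup of GL₂(𝔽_p) whose image under the determinant map is all of 𝔽_p^×. Assume that either (i) every element of G is diagonal or antidiagonal and G contains an antidiagonal element, or (ii) there is a non-square α ∈ 𝔽_p^× such that every element of G is of the form [[a, bα],[b, a]] or [[a, −bα],[b, −a]] with (a,b) ≠ (0,0). Then G contains every square of a scalar matrix: for all c ∈ 𝔽_p^×, the matrix c²·I belongs to G. -/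
open Matrix
open scoped MatrixGroups

theorem stmt_9 (p : ℕ) (hp : p.Prime) (hodd : Odd p)
    (G : Subgroup (GL (Fin 2) (ZMod p)))
    (hdet : ∀ u : (ZMod p)ˣ, ∃ A ∈ G, Matrix.GeneralLinearGroup.det A = u)
    (hcartan :
      ((∀ g ∈ G, ((g : Matrix (Fin 2) (Fin 2) (ZMod p)) 0 1 = 0 ∧
                  (g : Matrix (Fin 2) (Fin 2) (ZMod p)) 1 0 = 0) ∨
                 ((g : Matrix (Fin 2) (Fin 2) (ZMod p)) 0 0 = 0 ∧
                  (g : Matrix (Fin 2) (Fin 2) (ZMod p)) 1 1 = 0)) ∧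
       (∃ g ∈ G, (g : Matrix (Fin 2) (Fin 2) (ZMod p)) 0 0 = 0 ∧
                 (g : Matrix (Fin 2) (Fin 2) (ZMod p)) 1 1 = 0)) ∨
      (∃ α : ZMod p, α ≠ 0 ∧ ¬ IsSquare α ∧
        ∀ g ∈ G, ∃ a b : ZMod p, (a, b) ≠ (0, 0) ∧
          ((g : Matrix (Fin 2) (Fin 2) (ZMod p)) = !![a, b * α; b, a] ∨
           (g : Matrix (Fin 2) (Fin 2) (ZMod p)) = !![a, -(b * α); b, -a]))) :
    ∀ c : (ZMod p)ˣ, ∃ h ∈ G, (h : Matrix (Fin 2) (Fin 2) (ZMod p)) =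
      ((c : ZMod p)) ^ 2 • (1 : Matrix (Fin 2) (Fin 2) (ZMod p)) := by
  haveI := Fact.mk hp
  intro c
  obtain ⟨A, hAG, hAdet⟩ := hdet c
  have hAdet' : (A : Matrix (Fin 2) (Fin 2) (ZMod p)).det = (c : ZMod p) := by
    have := congrArg Units.val hAdet
    rwa [Matrix.GeneralLinearGroup.val_det_apply] at this
  -- helper: if B ∈ G has scalar matrix s•1 with s² = c², square it
  have sq_step : ∀ B : GL (Fin 2) (ZMod p), B ∈ G → ∀ s : ZMod p,
      (B : Matrix (Fin 2) (Fin 2) (ZMod p)) = s • 1 → s ^ 2 = ((c : ZMod p)) ^ 2 →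
      ∃ h ∈ G, (h : Matrix (Fin 2) (Fin 2) (ZMod p)) =
        ((c : ZMod p)) ^ 2 • (1 : Matrix (Fin 2) (Fin 2) (ZMod p)) := by
    intro B hB s hBs hs
    refine ⟨B * B, G.mul_mem hB hB, ?_⟩
    rw [Units.val_mul, hBs, smul_mul_assoc, mul_smul_comm, one_mul, smul_smul, ← sq, hs]
  -- helper: inverse of a scalar element
  have inv_scalar : ∀ B : GL (Fin 2) (ZMod p), ∀ s : ZMod p,
      (B : Matrix (Fin 2) (Fin 2) (ZMod p)) = s • 1 →
      s ≠ 0 ∧ ((B⁻¹ : GL (Fin 2) (ZMod p)) : Matrix (Fin 2) (Fin 2) (ZMod p)) = s⁻¹ • 1 := by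
    intro B s hB
    have h1 : (B : Matrix (Fin 2) (Fin 2) (ZMod p)) *
        ((B⁻¹ : GL (Fin 2) (ZMod p)) : Matrix (Fin 2) (Fin 2) (ZMod p)) = 1 := by
      rw [← Units.val_mul, mul_inv_cancel, Units.val_one]
    have hs : s ≠ 0 := by
      rintro rfl
      rw [hB, zero_smul, zero_mul] at h1
      have := congrFun (congrFun h1 0) 0
      simp [Matrix.one_apply] at this
    refine ⟨hs, ?_⟩
    have : ((B⁻¹ : GL (Fin 2) (ZMod p)) : Matrix (Fin 2) (Fin 2) (ZMod p)) =
        s⁻¹ • ((B : Matrix (Fin 2) (Fin 2) (ZMod p)) *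
          ((B⁻¹ : GL (Fin 2) (ZMod p)) : Matrix (Fin 2) (Fin 2) (ZMod p))) := by
      rw [hB, smul_mul_assoc, one_mul, smul_smul, inv_mul_cancel₀ hs, one_smul]
    rw [this, h1]
  rcases hcartan with ⟨hall, w, hwG, hw00, hw11⟩ | ⟨α, hα0, hαns, hall⟩
  · -- split case
    set u := (w : Matrix (Fin 2) (Fin 2) (ZMod p)) 0 1 with hu
    set v := (w : Matrix (Fin 2) (Fin 2) (ZMod p)) 1 0 with hv
    have hw : (w : Matrix (Fin 2) (Fin 2) (ZMod p)) = !![0, u; v, 0] := by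
      ext i j; fin_cases i <;> fin_cases j <;> simp [hw00, hw11, hu, hv]
    have hww : ((w * w : GL (Fin 2) (ZMod p)) : Matrix (Fin 2) (Fin 2) (ZMod p)) =
        (u * v) • 1 := by
      rw [Units.val_mul, hw, Matrix.mul_fin_two]
      ext i j; fin_cases i <;> fin_cases j <;> simp [Matrix.one_apply, mul_comm]
    rcases hall A hAG with ⟨h01, h10⟩ | ⟨h00, h11⟩
    · -- A diagonal
      set x := (A : Matrix (Fin 2) (Fin 2) (ZMod p)) 0 0 with hx
      set y := (A : Matrix (Fin 2) (Fin 2) (ZMod p)) 1 1 with hy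
      have hA : (A : Matrix (Fin 2) (Fin 2) (ZMod p)) = !![x, 0; 0, y] := by
        ext i j; fin_cases i <;> fin_cases j <;> simp [h01, h10, hx, hy]
      have hxy : x * y = (c : ZMod p) := by
        rw [hA, Matrix.det_fin_two_of] at hAdet'
        linear_combination hAdet'
      have hE : ((A * w * A * w : GL (Fin 2) (ZMod p)) : Matrix (Fin 2) (Fin 2) (ZMod p)) =
          ((c : ZMod p) * (u * v)) • 1 := by
        simp only [Units.val_mul, hA, hw]
        rw [Matrix.mul_fin_two, Matrix.mul_fin_two, Matrix.mul_fin_two]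
        ext i j; fin_cases i <;> fin_cases j <;>
          simp [Matrix.one_apply] <;> linear_combination (u * v) * hxy
      obtain ⟨huv, hinv⟩ := inv_scalar (w * w) (u * v) hww
      refine sq_step (A * w * A * w * (w * w)⁻¹)
        (G.mul_mem (G.mul_mem (G.mul_mem (G.mul_mem hAG hwG) hAG) hwG)
          (G.inv_mem (G.mul_mem hwG hwG))) (c : ZMod p) ?_ rfl
      rw [Units.val_mul, hE, hinv, smul_mul_assoc, mul_smul_comm, one_mul, smul_smul]
      rw [mul_assoc, mul_inv_cancel₀ huv, mul_one]
    · -- A antidiagonal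
      set y := (A : Matrix (Fin 2) (Fin 2) (ZMod p)) 0 1 with hy
      set z := (A : Matrix (Fin 2) (Fin 2) (ZMod p)) 1 0 with hz
      have hA : (A : Matrix (Fin 2) (Fin 2) (ZMod p)) = !![0, y; z, 0] := by
        ext i j; fin_cases i <;> fin_cases j <;> simp [h00, h11, hy, hz]
      have hyz : y * z = -(c : ZMod p) := by
        rw [hA, Matrix.det_fin_two_of] at hAdet'
        linear_combination -hAdet'
      refine sq_step (A * A) (G.mul_mem hAG hAG) (-(c : ZMod p)) ?_ (by ring)
      rw [Units.val_mul, hA, Matrix.mul_fin_two]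
      ext i j; fin_cases i <;> fin_cases j <;>
        simp [Matrix.one_apply] <;> linear_combination hyz
  · -- nonsplit case
    obtain ⟨a, b, -, hform | hform⟩ := hall A hAG
    · -- Cartan element: use A^(p+1)
      have hdet2 : a ^ 2 - b ^ 2 * α = (c : ZMod p) := by
        rw [hform, Matrix.det_fin_two_of] at hAdet'
        linear_combination hAdet'
      set J : Matrix (Fin 2) (Fin 2) (ZMod p) := !![0, α; 1, 0] with hJ
      have hJ2 : J * J = α • 1 := by
        rw [hJ, Matrix.mul_fin_two]
        ext i j; fin_cases i <;> fin_cases j <;> simp [Matrix.one_apply]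
      have hAval : (A : Matrix (Fin 2) (Fin 2) (ZMod p)) = a • 1 + b • J := by
        rw [hform, hJ]
        ext i j; fin_cases i <;> fin_cases j <;> simp [Matrix.one_apply, mul_comm]
      -- Frobenius computation
      have hcomm : Commute (a • (1 : Matrix (Fin 2) (Fin 2) (ZMod p))) (b • J) :=
        (Commute.one_left (b • J)).smul_left a
      have hα12 : α ^ (p / 2) = -1 := by
        rcases ZMod.pow_div_two_eq_neg_one_or_one p hα0 with h | h
        · exact absurd ((ZMod.euler_criterion p hα0).mpr h) hαns
        · exact h
      have hJp : J ^ p = -J := by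
        obtain ⟨k, hk⟩ := hodd
        have hk2 : p / 2 = k := by omega
        have : J ^ p = (J * J) ^ k * J := by
          rw [← sq, ← pow_mul, ← pow_succ, ← hk]
        rw [this, hJ2, smul_pow, one_pow, smul_mul_assoc, one_mul, ← hk2, hα12, neg_one_smul]
      have hAp : (A : Matrix (Fin 2) (Fin 2) (ZMod p)) ^ p = a • 1 - b • J := by
        rw [hAval, add_pow_char_of_commute p hcomm, smul_pow, smul_pow, one_pow,
          ZMod.pow_card, ZMod.pow_card, hJp, smul_neg, sub_eq_add_neg]
      have key : (A : Matrix (Fin 2) (Fin 2) (ZMod p)) ^ (p + 1) = (c : ZMod p) • 1 := by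
        rw [pow_succ, hAp, hAval, ← hdet2, hJ]
        ext i j
        fin_cases i <;> fin_cases j <;>
          simp [Matrix.mul_apply, Fin.sum_univ_two, Matrix.one_apply] <;> ring
      refine sq_step (A ^ (p + 1)) (G.pow_mem hAG (p + 1)) (c : ZMod p) ?_ rfl
      rw [Units.val_pow_eq_pow_val, key]
    · -- reflection element
      have hdet2 : a ^ 2 - b ^ 2 * α = -(c : ZMod p) := by
        rw [hform, Matrix.det_fin_two_of] at hAdet'
        linear_combination -hAdet'
      refine sq_step (A * A) (G.mul_mem hAG hAG) (-(c : ZMod p)) ?_ (by ring)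
      rw [Units.val_mul, hform, Matrix.mul_fin_two, ← hdet2]
      ext i j; fin_cases i <;> fin_cases j <;> simp [Matrix.one_apply] <;> ring
end

section
/- Let p be a prime number, let G be a subgroup of GL₂(𝔽_p) all of whose elements are upper-triangular matrices, and let a, b be natural numbers with a + b = 12. Suppose that for every c ∈ 𝔽_p^× there exist elements g and h of G whose diagonal entries are (c^a, c^b) and (c^b, c^a) respectively. Then for every c ∈ 𝔽_p^×, the scalar matrix c¹²·I belongs to G. -/
open Matrix
open scoped MatrixGroups

lemma upper_pow_card (p : ℕ) (hp : p.Prime) (d : ZMod p)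
    (M : Matrix (Fin 2) (Fin 2) (ZMod p))
    (h10 : M 1 0 = 0) (h00 : M 0 0 = d) (h11 : M 1 1 = d) :
    M ^ p = d • (1 : Matrix (Fin 2) (Fin 2) (ZMod p)) := by
  haveI : Fact p.Prime := ⟨hp⟩
  set N : Matrix (Fin 2) (Fin 2) (ZMod p) := M - d • 1 with hN
  have hM : M = d • 1 + N := by simp [hN]
  have hN2 : N ^ 2 = 0 := by
    ext i j
    fin_cases i <;> fin_cases j <;>
      simp [hN, pow_two, Matrix.mul_apply, Fin.sum_univ_two, Matrix.one_apply,
        h10, h00, h11]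
  have hcomm : Commute (d • (1 : Matrix (Fin 2) (Fin 2) (ZMod p))) N := by
    unfold Commute SemiconjBy
    simp
  rw [hM, add_pow_char_of_commute p hcomm]
  have hNp : N ^ p = 0 := by
    have : N ^ p = N ^ 2 * N ^ (p - 2) := by
      rw [← pow_add]
      congr 1
      have := hp.two_le; omega
    rw [this, hN2, zero_mul]
  have hdp : (d • (1 : Matrix (Fin 2) (Fin 2) (ZMod p))) ^ p = d • 1 := by
    rw [smul_pow, one_pow, ZMod.pow_card]
  rw [hNp, hdp, add_zero]

theorem stmt_14 (p : ℕ) (hp : p.Prime)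
    (G : Subgroup (GL (Fin 2) (ZMod p)))
    (hupper : ∀ g ∈ G, (g : Matrix (Fin 2) (Fin 2) (ZMod p)) 1 0 = 0)
    (a b : ℕ) (hab : a + b = 12)
    (hdiag : ∀ c : (ZMod p)ˣ,
      (∃ g ∈ G, (g : Matrix (Fin 2) (Fin 2) (ZMod p)) 0 0 = (c : ZMod p) ^ a ∧
                (g : Matrix (Fin 2) (Fin 2) (ZMod p)) 1 1 = (c : ZMod p) ^ b) ∧
      (∃ h ∈ G, (h : Matrix (Fin 2) (Fin 2) (ZMod p)) 0 0 = (c : ZMod p) ^ b ∧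
                (h : Matrix (Fin 2) (Fin 2) (ZMod p)) 1 1 = (c : ZMod p) ^ a)) :
    ∀ c : (ZMod p)ˣ, ∃ k ∈ G, (k : Matrix (Fin 2) (Fin 2) (ZMod p)) =
      (c : ZMod p) ^ 12 • (1 : Matrix (Fin 2) (Fin 2) (ZMod p)) := by
  intro c
  obtain ⟨⟨g, hgG, hg00, hg11⟩, ⟨h, hhG, hh00, hh11⟩⟩ := hdiag c
  have hg10 := hupper g hgG
  have hh10 := hupper h hhG
  refine ⟨(g * h) ^ p, pow_mem (mul_mem hgG hhG) p, ?_⟩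
  have hcoe : ((((g * h) ^ p : GL (Fin 2) (ZMod p))) : Matrix (Fin 2) (Fin 2) (ZMod p))
      = (((g : Matrix (Fin 2) (Fin 2) (ZMod p)) * h) ^ p) := by
    push_cast
    rfl
  rw [hcoe]
  apply upper_pow_card p hp
  · simp [Matrix.mul_apply, Fin.sum_univ_two, hg10, hh10]
  · have : (c : ZMod p) ^ a * (c : ZMod p) ^ b = (c : ZMod p) ^ 12 := by
      rw [← pow_add, hab]
    simp [Matrix.mul_apply, Fin.sum_univ_two, hg10, hh10, hg00, hh00, this]
  · have : (c : ZMod p) ^ b * (c : ZMod p) ^ a = (c : ZMod p) ^ 12 := by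
      rw [← pow_add, add_comm, hab]
    simp [Matrix.mul_apply, Fin.sum_univ_two, hg10, hh10, hg11, hh11, this]
end

section
/- Let p be a prime number and let G be a subgroup of GL₂(𝔽_p) all of whose elements are upper-triangular matrices. Suppose that for every c ∈ 𝔽_p^× there exists an element of G with diagonal entries (1, c¹²) and an element of G with diagonal entries (c⁴, c⁸). Then for every c ∈ 𝔽_p^×, the scalar matrix c¹²·I belongs to G. -/
open Matrix
open scoped MatrixGroups

theorem stmt_15 (p : ℕ) (hp : p.Prime)
    (G : Subgroup (GL (Fin 2) (ZMod p)))
    (hupper : ∀ g ∈ G, (g : Matrix (Fin 2) (Fin 2) (ZMod p)) 1 0 = 0)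
    (hdiag : ∀ c : (ZMod p)ˣ,
      (∃ g ∈ G, (g : Matrix (Fin 2) (Fin 2) (ZMod p)) 0 0 = 1 ∧
                (g : Matrix (Fin 2) (Fin 2) (ZMod p)) 1 1 = (c : ZMod p) ^ 12) ∧
      (∃ h ∈ G, (h : Matrix (Fin 2) (Fin 2) (ZMod p)) 0 0 = (c : ZMod p) ^ 4 ∧
                (h : Matrix (Fin 2) (Fin 2) (ZMod p)) 1 1 = (c : ZMod p) ^ 8)) :
    ∀ c : (ZMod p)ˣ, ∃ k ∈ G, (k : Matrix (Fin 2) (Fin 2) (ZMod p)) =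
      (c : ZMod p) ^ 12 • (1 : Matrix (Fin 2) (Fin 2) (ZMod p)) := by
  haveI : Fact p.Prime := ⟨hp⟩
  intro c
  obtain ⟨⟨g, hgG, hg00, hg11⟩, -⟩ := hdiag c⁻¹
  obtain ⟨-, ⟨h, hhG, hh00, hh11⟩⟩ := hdiag (c ^ 3)
  set a : ZMod p := (c : ZMod p) ^ 12 with ha
  have hg10 : (g : Matrix (Fin 2) (Fin 2) (ZMod p)) 1 0 = 0 := hupper g hgG
  have hh10 : (h : Matrix (Fin 2) (Fin 2) (ZMod p)) 1 0 = 0 := hupper h hhG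
  have hcne : (c : ZMod p) ≠ 0 := c.ne_zero
  -- the product
  set M : Matrix (Fin 2) (Fin 2) (ZMod p) := ((g * h : GL (Fin 2) (ZMod p)) : Matrix (Fin 2) (Fin 2) (ZMod p)) with hM
  have hMval : M = (g : Matrix (Fin 2) (Fin 2) (ZMod p)) * (h : Matrix (Fin 2) (Fin 2) (ZMod p)) := rfl
  have hM00 : M 0 0 = a := by
    rw [hMval, Matrix.mul_apply, Fin.sum_univ_two, hg00, hh00, hh10]
    push_cast
    ring
  have hM11 : M 1 1 = a := by
    rw [hMval, Matrix.mul_apply, Fin.sum_univ_two, hg10, hg11, hh11]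
    push_cast
    field_simp
    ring
  have hM10 : M 1 0 = 0 := by
    rw [hMval, Matrix.mul_apply, Fin.sum_univ_two, hg10, hh10]
    ring
  set E : Matrix (Fin 2) (Fin 2) (ZMod p) := !![0, 1; 0, 0] with hE
  have hMdecomp : M = a • (1 : Matrix (Fin 2) (Fin 2) (ZMod p)) + (M 0 1) • E := by
    ext i j
    fin_cases i <;> fin_cases j <;>
      simp [hE, hM00, hM11, hM10, Matrix.one_apply]
  have hE2 : E ^ 2 = 0 := by
    rw [hE, pow_two]
    ext i j
    fin_cases i <;> fin_cases j <;> simp [Matrix.mul_apply, Fin.sum_univ_two]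
  have hEp : E ^ p = 0 := by
    have h2p : 2 + (p - 2) = p := by have := hp.two_le; omega
    calc E ^ p = E ^ 2 * E ^ (p - 2) := by rw [← pow_add, h2p]
    _ = 0 := by rw [hE2, zero_mul]
  have hcomm : Commute (a • (1 : Matrix (Fin 2) (Fin 2) (ZMod p))) ((M 0 1) • E) :=
    ((Commute.one_left _).smul_left a)
  have hMp : M ^ p = a • (1 : Matrix (Fin 2) (Fin 2) (ZMod p)) := by
    rw [hMdecomp, add_pow_char_of_commute p hcomm, smul_pow, smul_pow, hEp, smul_zero, add_zero,
      one_pow, ZMod.pow_card]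
  refine ⟨(g * h) ^ p, pow_mem (mul_mem hgG hhG) p, ?_⟩
  rw [Units.val_pow_eq_pow_val]
  exact hMp
end

section
/- Let p be a prime number and let G be a subgroup of GL₂(𝔽_p) all of whose elements are upper-triangular matrices. Suppose that for every c ∈ 𝔽_p^× there exists an element of G with diagonal entries (1, c¹²) and an element of G with diagonal entries (c⁸, c⁴). Then for every c ∈ 𝔽_p^×, the scalar matrix c²⁴·I belongs to G. -/
open Matrix
open scoped MatrixGroups

lemma aux_pow_card (p : ℕ) (hp : p.Prime) (M : Matrix (Fin 2) (Fin 2) (ZMod p))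
    (a : ZMod p) (h10 : M 1 0 = 0) (h00 : M 0 0 = a) (h11 : M 1 1 = a) :
    M ^ p = a • (1 : Matrix (Fin 2) (Fin 2) (ZMod p)) := by
  haveI : Fact p.Prime := ⟨hp⟩
  set N : Matrix (Fin 2) (Fin 2) (ZMod p) := Matrix.single 0 1 (M 0 1) with hN
  have hM : M = a • 1 + N := by
    ext i j
    fin_cases i <;> fin_cases j <;>
      simp [hN, Matrix.single, Matrix.one_apply, h10, h00, h11]
  have hN2 : N ^ 2 = 0 := by
    ext i j
    fin_cases i <;> fin_cases j <;>
      simp [hN, pow_two, Matrix.mul_apply, Fin.sum_univ_two, Matrix.single]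
  have hc : Commute (a • (1 : Matrix (Fin 2) (Fin 2) (ZMod p))) N :=
    (Commute.one_left N).smul_left a
  have hNp : N ^ p = 0 := pow_eq_zero_of_le hp.two_le hN2
  rw [hM, add_pow_char_of_commute p hc, hNp, add_zero, smul_pow, one_pow, ZMod.pow_card]

theorem stmt_16 (p : ℕ) (hp : p.Prime)
    (G : Subgroup (GL (Fin 2) (ZMod p)))
    (hupper : ∀ g ∈ G, (g : Matrix (Fin 2) (Fin 2) (ZMod p)) 1 0 = 0)
    (hdiag : ∀ c : (ZMod p)ˣ,
      (∃ g ∈ G, (g : Matrix (Fin 2) (Fin 2) (ZMod p)) 0 0 = 1 ∧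
                (g : Matrix (Fin 2) (Fin 2) (ZMod p)) 1 1 = (c : ZMod p) ^ 12) ∧
      (∃ h ∈ G, (h : Matrix (Fin 2) (Fin 2) (ZMod p)) 0 0 = (c : ZMod p) ^ 8 ∧
                (h : Matrix (Fin 2) (Fin 2) (ZMod p)) 1 1 = (c : ZMod p) ^ 4)) :
    ∀ c : (ZMod p)ˣ, ∃ k ∈ G, (k : Matrix (Fin 2) (Fin 2) (ZMod p)) =
      (c : ZMod p) ^ 24 • (1 : Matrix (Fin 2) (Fin 2) (ZMod p)) := by
  intro c
  obtain ⟨⟨g, hgG, hg00, hg11⟩, -⟩ := hdiag c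
  obtain ⟨-, ⟨h, hhG, hh00, hh11⟩⟩ := hdiag (c ^ 3)
  have hc3 : ((c ^ 3 : (ZMod p)ˣ) : ZMod p) = (c : ZMod p) ^ 3 := by push_cast; ring
  rw [hc3] at hh00 hh11
  have hg10 : (g : Matrix (Fin 2) (Fin 2) (ZMod p)) 1 0 = 0 := hupper g hgG
  have hh10 : (h : Matrix (Fin 2) (Fin 2) (ZMod p)) 1 0 = 0 := hupper h hhG
  refine ⟨(g * h) ^ p, pow_mem (mul_mem hgG hhG) p, ?_⟩
  have hval : (((g * h) ^ p : GL (Fin 2) (ZMod p)) : Matrix (Fin 2) (Fin 2) (ZMod p))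
      = ((g : Matrix (Fin 2) (Fin 2) (ZMod p)) * (h : Matrix (Fin 2) (Fin 2) (ZMod p))) ^ p := by
    simp [Units.val_pow_eq_pow_val]
  rw [hval]
  apply aux_pow_card p hp
  · simp [Matrix.mul_apply, Fin.sum_univ_two, hg10, hh10]
  · rw [Matrix.mul_apply, Fin.sum_univ_two, hg00, hh00, hh10]
    ring
  · rw [Matrix.mul_apply, Fin.sum_univ_two, hg10, hg11, hh11]
    ring
end
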